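/- The second derivative of W_M with respect to x is strictly positive at every x ∈ [0,ρ]; in particular W_M is strictly convex on [0,ρ], so the relation between the mixed gated/exhaustive mean low-priority waiting time and the high-priority arrival intensity is not a straight line. -/

import Mathlib

/-- Gated mean low-priority waiting time, as a function of the
high-priority occupation rate `x`, with total occupation rate `ρ`
and deterministic vacation length `S`. -/
noncomputable def WG (ρ S x : ℝ) : ℝ :=
  (1 + ρ + x) * (S / (2 * (1 - ρ)) + ρ / (1 - ρ ^ 2))

/-- Mixed gated/exhaustive mean low-priority waiting time, as a function
of the high-priority occupation rate `x`. -/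
noncomputable def WM (ρ S x : ℝ) : ℝ :=
  ρ / ((1 - ρ) * (1 - x)) + S * (1 + ρ * (1 - 2 * x)) / (2 * (1 - ρ) * (1 - x))

/-!
Writing `1 + ρ (1 - 2x) = (1 - ρ) + 2ρ (1 - x)` shows that, away from the pole `x = 1`,
`W_M(x) = C / (1 - x) + S ρ / (1 - ρ)` with `C = ρ / (1 - ρ) + S / 2 > 0`.
Hence `W_M'' (x) = 2C / (1 - x)³ > 0` for `x < 1`, so `W_M` is strictly convex there,
and a strictly convex function cannot agree with an affine one on a nondegenerate interval.
-/

open Set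

theorem StrictConvexOn.not_eqOn_of_concaveOn {𝕜 E β : Type*} [Field 𝕜] [LinearOrder 𝕜]
    [IsStrictOrderedRing 𝕜] [AddCommGroup E] [Module 𝕜 E]
    [AddCommGroup β] [PartialOrder β] [IsOrderedAddMonoid β] [Module 𝕜 β]
    {s : Set E} {f g : E → β} (hf : StrictConvexOn 𝕜 s f) (hg : ConcaveOn 𝕜 s g)
    {a b : E} (ha : a ∈ s) (hb : b ∈ s) (hab : a ≠ b) : ¬ EqOn f g s := by
  intro hfg
  have hhalf : (0 : 𝕜) < 2⁻¹ := by positivity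
  have hsum : (2⁻¹ : 𝕜) + 2⁻¹ = 1 := by
    rw [← two_mul, mul_inv_cancel₀ two_ne_zero]
  have hmid := hf.1 ha hb hhalf.le hhalf.le hsum
  have hlt := hf.2 ha hb hab hhalf hhalf hsum
  have hle := hg.2 ha hb hhalf.le hhalf.le hsum
  rw [hfg ha, hfg hb, hfg hmid] at hlt
  exact hlt.not_ge hle

theorem concaveOn_affine {s : Set ℝ} (hs : Convex ℝ s) (c₀ c₁ : ℝ) :
    ConcaveOn ℝ s fun x => c₀ + c₁ * x :=
  (concaveOn_const c₀ hs).add ((LinearMap.mulLeft ℝ c₁).concaveOn hs)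

theorem hasDerivAt_div_one_sub_pow (c : ℝ) (n : ℕ) {x : ℝ} (hx : x ≠ 1) :
    HasDerivAt (fun y => c / (1 - y) ^ n) (n * c / (1 - x) ^ (n + 1)) x := by
  have h1x : 1 - x ≠ 0 := sub_ne_zero.mpr hx.symm
  have hpow : HasDerivAt (fun y => (1 - y) ^ n) (n * (1 - x) ^ (n - 1) * (-1)) x :=
    ((hasDerivAt_id x).const_sub 1).fun_pow n
  have h := (hpow.fun_inv (pow_ne_zero n h1x)).const_mul c
  simp only [← div_eq_mul_inv] at h
  refine h.congr_deriv ?_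
  rcases n with _ | n
  · simp
  · rw [Nat.add_sub_cancel]
    field_simp
    ring

section WM

variable {ρ S : ℝ}

theorem WM_eqOn (hρ : ρ ≠ 1) :
    EqOn (WM ρ S) (fun x => (ρ / (1 - ρ) + S / 2) / (1 - x) + S * ρ / (1 - ρ)) {1}ᶜ := by
  intro x hx
  have h1ρ : 1 - ρ ≠ 0 := sub_ne_zero.mpr (Ne.symm hρ)
  have h1x : 1 - x ≠ 0 := sub_ne_zero.mpr (Ne.symm hx)
  simp only [WM]
  field_simp
  ring

theorem hasDerivAt_WM (hρ : ρ ≠ 1) {x : ℝ} (hx : x ≠ 1) :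
    HasDerivAt (WM ρ S) ((ρ / (1 - ρ) + S / 2) / (1 - x) ^ 2) x := by
  have hWM : WM ρ S =ᶠ[nhds x] _ :=
    (WM_eqOn hρ).eventuallyEq_of_mem (isOpen_compl_singleton.mem_nhds hx)
  refine HasDerivAt.congr_of_eventuallyEq ?_ hWM
  simpa using
    (hasDerivAt_div_one_sub_pow (ρ / (1 - ρ) + S / 2) 1 hx).add_const (S * ρ / (1 - ρ))

theorem deriv_deriv_WM (hρ : ρ ≠ 1) {x : ℝ} (hx : x ≠ 1) :
    deriv (deriv (WM ρ S)) x = 2 * (ρ / (1 - ρ) + S / 2) / (1 - x) ^ 3 := by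
  have hderiv : deriv (WM ρ S) =ᶠ[nhds x] fun y => (ρ / (1 - ρ) + S / 2) / (1 - y) ^ 2 :=
    eventually_ne_nhds hx |>.mono fun y hy => (hasDerivAt_WM hρ hy).deriv
  rw [hderiv.deriv_eq]
  exact_mod_cast (hasDerivAt_div_one_sub_pow _ 2 hx).deriv

theorem deriv_deriv_WM_pos (hρ0 : 0 ≤ ρ) (hρ1 : ρ < 1) (hS : 0 < S) {x : ℝ} (hx : x < 1) :
    0 < deriv (deriv (WM ρ S)) x := by
  rw [deriv_deriv_WM hρ1.ne hx.ne]
  have : 0 < 1 - ρ := sub_pos.mpr hρ1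
  have : 0 < 1 - x := sub_pos.mpr hx
  positivity

theorem strictConvexOn_WM (hρ0 : 0 ≤ ρ) (hρ1 : ρ < 1) (hS : 0 < S) :
    StrictConvexOn ℝ (Iio 1) (WM ρ S) := by
  refine strictConvexOn_of_deriv2_pos' (convex_Iio 1) (fun x hx => ?_)
    fun x hx => deriv_deriv_WM_pos hρ0 hρ1 hS hx
  exact (hasDerivAt_WM hρ1.ne hx.ne).continuousAt.continuousWithinAt

end WM

/-- the second derivative of W_M is strictly positive at every
x ∈ [0,ρ]; in particular W_M is strictly convex on [0,ρ], so it is not affine. -/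
theorem deriv2_WM_pos (ρ S : ℝ) (hρ0 : 0 < ρ) (hρ1 : ρ < 1) (hS : 0 < S) :
    (∀ x ∈ Set.Icc (0 : ℝ) ρ, 0 < deriv (deriv (WM ρ S)) x) ∧
    StrictConvexOn ℝ (Set.Icc (0 : ℝ) ρ) (WM ρ S) ∧
    ¬ ∃ c₀ c₁ : ℝ, ∀ x ∈ Set.Icc (0 : ℝ) ρ, WM ρ S x = c₀ + c₁ * x := by
  have hIcc : Icc 0 ρ ⊆ Iio 1 := fun x hx => hx.2.trans_lt hρ1
  have hconv : StrictConvexOn ℝ (Icc 0 ρ) (WM ρ S) :=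
    (strictConvexOn_WM hρ0.le hρ1 hS).subset hIcc (convex_Icc 0 ρ)
  refine ⟨fun x hx => deriv_deriv_WM_pos hρ0.le hρ1 hS (hIcc hx), hconv, ?_⟩
  rintro ⟨c₀, c₁, hWM⟩
  exact hconv.not_eqOn_of_concaveOn (concaveOn_affine (convex_Icc 0 ρ) c₀ c₁)
    (left_mem_Icc.mpr hρ0.le) (right_mem_Icc.mpr hρ0.le) hρ0.ne hWM
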